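/- arXiv:2501.12876 — 5 statements merged into one kernel-verified Lean document; each statement's English description precedes it below -/
import Mathlib

section
/- Let H ⊆ C(K,E) be a linear subspace separating points of K. For s, t ∈ K and α ∈ 𝔽, the following are equivalent: (a) h(t) = α·h(s) for all h ∈ H; (b) f(t) = α·f(s) for all f ∈ H_w. In particular, the vector-valued evaluation map satisfies φ_H(t) = α φ_H(s) iff φ_{H_w}(t) = α φ_{H_w}(s). -/
/-! The condition `g t = α * g s` is linear in `g`, so it passes from the generators `x* ∘ h` of
`H_w` to their span; conversely, by Hahn–Banach the functionals `x*` separate the points of `E`,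
so `x* (h t) = α * x* (h s)` for all `x*` forces `h t = α • h s`. -/

open ContinuousMap

theorem SeparatingDual.eq_smul_iff_forall_dual {R V : Type*} [CommRing R] [TopologicalSpace R]
    [AddCommGroup V] [TopologicalSpace V] [Module R V] [SeparatingDual R V] {u v : V} {α : R} :
    u = α • v ↔ ∀ x : StrongDual R V, x u = α * x v := by
  rw [SeparatingDual.eq_iff_forall_dual_eq (R := R)]
  simp only [map_smul, smul_eq_mul]

namespace ContinuousMap

variable {𝕜 K E : Type*} [RCLike 𝕜] [TopologicalSpace K] [NormedAddCommGroup E] [NormedSpace 𝕜 E]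

/-- The space `H_w` of the paper. -/
def weakSpan (H : Submodule 𝕜 C(K, E)) : Submodule 𝕜 C(K, 𝕜) :=
  Submodule.span 𝕜 {g : C(K, 𝕜) | ∃ f ∈ H, ∃ x : E →L[𝕜] 𝕜, ∀ u : K, g u = x (f u)}

theorem comp_mem_weakSpan {H : Submodule 𝕜 C(K, E)} {f : C(K, E)} (hf : f ∈ H)
    (x : E →L[𝕜] 𝕜) : (x : C(E, 𝕜)).comp f ∈ weakSpan H :=
  Submodule.subset_span ⟨f, hf, x, fun _ => rfl⟩

theorem apply_eq_mul_of_mem_weakSpan {H : Submodule 𝕜 C(K, E)} {s t : K} {α : 𝕜}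
    (hH : ∀ h ∈ H, h t = α • h s) {g : C(K, 𝕜)} (hg : g ∈ weakSpan H) :
    g t = α * g s := by
  let ev (u : K) : C(K, 𝕜) →ₗ[𝕜] 𝕜 := (evalCLM 𝕜 u : C(K, 𝕜) →L[𝕜] 𝕜)
  refine LinearMap.eqOn_span' (f := ev t) (g := α • ev s) ?_ hg
  rintro g ⟨f, hf, x, hx⟩
  show g t = α * g s
  rw [hx, hx, hH f hf, map_smul, smul_eq_mul]

end ContinuousMap

theorem stmt_5_general {𝕜 K E : Type*} [RCLike 𝕜] [TopologicalSpace K]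
    [NormedAddCommGroup E] [NormedSpace 𝕜 E]
    (H : Submodule 𝕜 C(K, E))
    (s t : K) (α : 𝕜) :
    (∀ h ∈ H, h t = α • h s) ↔
      (∀ g ∈ Submodule.span 𝕜
          {g : C(K, 𝕜) | ∃ f ∈ H, ∃ x : E →L[𝕜] 𝕜, ∀ u : K, g u = x (f u)},
        g t = α * g s) := by
  refine ⟨fun hH _ hg => apply_eq_mul_of_mem_weakSpan hH hg, fun hw h hh => ?_⟩
  rw [SeparatingDual.eq_smul_iff_forall_dual]
  exact fun x => hw _ (comp_mem_weakSpan hh x)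

/-- for a point-separating subspace `H ⊆ C(K,E)`, `s, t ∈ K` and a scalar `α`,
one has `h(t) = α • h(s)` for all `h ∈ H` iff `f(t) = α * f(s)` for all `f ∈ H_w`;
i.e. `φ_H(t) = α φ_H(s)` iff `φ_{H_w}(t) = α φ_{H_w}(s)`. -/
theorem stmt_5 {𝕜 K E : Type*} [RCLike 𝕜] [TopologicalSpace K] [CompactSpace K] [T2Space K]
    [NormedAddCommGroup E] [NormedSpace 𝕜 E] [CompleteSpace E]
    (H : Submodule 𝕜 C(K, E))
    (hsep : ∀ s t : K, s ≠ t → ∃ f ∈ H, f s ≠ f t)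
    (s t : K) (α : 𝕜) :
    (∀ h ∈ H, h t = α • h s) ↔
      (∀ g ∈ Submodule.span 𝕜
          {g : C(K, 𝕜) | ∃ f ∈ H, ∃ x : E →L[𝕜] 𝕜, ∀ u : K, g u = x (f u)},
        g t = α * g s) :=
  stmt_5_general H s t α
end

section
/- Let K = {0,1}, E = 𝔽² with the sup norm, H = {f = (f₁,f₂) ∈ C(K,E) : f₁(0) = 0}. Then the evaluation operator φ_H(0) ∈ L(H,E) is not an extreme point of the unit ball of L(H,E): indeed, the operators U₁(f) = (f₁(1), f₂(0)) and U₂(f) = (−f₁(1), f₂(0)) both have norm ≤ 1, are distinct, and satisfy φ_H(0) = ½(U₁ + U₂). -/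
/-! Every `f ∈ H` has `f₁(0) = 0`, so evaluation at `0` is the average of
`f ↦ (f₁(1), f₂(0))` and `f ↦ (-f₁(1), f₂(0))`. Both have norm `≤ 1` for the sup norm and they
differ on `f(x) = (x, 0)`, so `φ_H(0)` is the midpoint of two distinct points of the unit ball. -/

open ContinuousMap

/-- The function space `H = {f ∈ C({0,1}, 𝔽²) : f₁(0) = 0}` with `E = (𝔽², ‖·‖_∞)`. -/
def H14 : Submodule ℝ C(Fin 2, Fin 2 → ℝ) where
  carrier := {f | f 0 0 = 0}
  add_mem' := by
    intro f g hf hg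
    simp only [Set.mem_setOf_eq, ContinuousMap.add_apply, Pi.add_apply] at *
    rw [hf, hg]; ring
  zero_mem' := by simp
  smul_mem' := by
    intro c f hf
    simp only [Set.mem_setOf_eq, ContinuousMap.smul_apply, Pi.smul_apply,
      smul_eq_mul] at *
    rw [hf]; ring

noncomputable instance : NormedAddCommGroup ↥H14 := inferInstance

noncomputable instance : NormedSpace ℝ ↥H14 := inferInstance

theorem midpoint_notMem_extremePoints {𝕜 E : Type*} [Ring 𝕜] [LinearOrder 𝕜]
    [IsStrictOrderedRing 𝕜] [Invertible (2 : 𝕜)] [AddCommGroup E] [Module 𝕜 E] {A : Set E}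
    {x y : E} (hx : x ∈ A) (hy : y ∈ A) (hxy : x ≠ y) :
    midpoint 𝕜 x y ∉ A.extremePoints 𝕜 := fun h ↦ by
  obtain ⟨hx_eq, hy_eq⟩ := (mem_extremePoints.1 h).2 x hx y hy (midpoint_mem_openSegment x y)
  exact hxy (hx_eq.trans hy_eq.symm)

theorem ContinuousMap.norm_apply_apply_le {X ι : Type*} [TopologicalSpace X] [CompactSpace X]
    [Fintype ι] {E : ι → Type*} [∀ i, NormedAddCommGroup (E i)] (f : C(X, ∀ i, E i)) (x : X)
    (i : ι) : ‖f x i‖ ≤ ‖f‖ :=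
  (norm_le_pi_norm (f x) i).trans (f.norm_coe_le_norm x)

namespace H14

noncomputable def mixedEval (s : ℝ) : ↥H14 →L[ℝ] (Fin 2 → ℝ) :=
  ContinuousLinearMap.pi
    ![s • (ContinuousLinearMap.proj 0).comp ((evalCLM ℝ 1).comp H14.subtypeL),
      (ContinuousLinearMap.proj 1).comp ((evalCLM ℝ 0).comp H14.subtypeL)]

theorem mixedEval_apply (s : ℝ) (f : ↥H14) :
    mixedEval s f = ![s * (f : C(Fin 2, Fin 2 → ℝ)) 1 0, (f : C(Fin 2, Fin 2 → ℝ)) 0 1] := by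
  ext i
  fin_cases i <;> rfl

theorem norm_mixedEval_le {s : ℝ} (hs : |s| ≤ 1) : ‖mixedEval s‖ ≤ 1 := by
  refine ContinuousLinearMap.opNorm_le_bound _ zero_le_one fun f ↦ ?_
  rw [one_mul, mixedEval_apply, pi_norm_le_iff_of_nonneg (norm_nonneg f), Fin.forall_fin_two]
  have h10 := (f : C(Fin 2, Fin 2 → ℝ)).norm_apply_apply_le 1 0
  refine ⟨?_, (f : C(Fin 2, Fin 2 → ℝ)).norm_apply_apply_le 0 1⟩
  calc ‖s * (f : C(Fin 2, Fin 2 → ℝ)) 1 0‖ = |s| * ‖(f : C(Fin 2, Fin 2 → ℝ)) 1 0‖ := by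
        rw [norm_mul, Real.norm_eq_abs]
    _ ≤ 1 * ‖f‖ := mul_le_mul hs h10 (norm_nonneg _) zero_le_one
    _ = ‖f‖ := one_mul _

def bump : ↥H14 :=
  ⟨⟨fun x ↦ Pi.single 0 (x : ℝ), continuous_of_discreteTopology⟩, by
    change (Pi.single 0 (((0 : Fin 2) : ℕ) : ℝ) : Fin 2 → ℝ) 0 = 0
    simp⟩

theorem mixedEval_injective : Function.Injective mixedEval := fun s t h ↦ by
  simpa [mixedEval_apply, bump] using congr($h bump 0)

theorem midpoint_mixedEval_apply (s : ℝ) (f : ↥H14) :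
    midpoint ℝ (mixedEval s) (mixedEval (-s)) f = (f : C(Fin 2, Fin 2 → ℝ)) 0 := by
  have hf : (f : C(Fin 2, Fin 2 → ℝ)) 0 0 = 0 := f.2
  ext i
  fin_cases i
  · simp [midpoint_eq_smul_add, mixedEval_apply, hf]
  · simp [midpoint_eq_smul_add, mixedEval_apply]
    ring

end H14

open H14 in
/-- for `K = {0,1}`, `E = (𝔽²,‖·‖_∞)` and
`H = {f ∈ C(K,E) : f₁(0) = 0}`, the evaluation operator `φ_H(0)` is not an extreme point of
the unit ball of `L(H,E)`: the distinct norm-≤1 operators `U₁(f) = (f₁(1), f₂(0))` and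
`U₂(f) = (−f₁(1), f₂(0))` average to `φ_H(0)`. -/
theorem stmt_14 (Φ : ↥H14 →L[ℝ] (Fin 2 → ℝ))
    (hΦ : ∀ f : ↥H14, Φ f = (f : C(Fin 2, Fin 2 → ℝ)) 0) :
    Φ ∉ Set.extremePoints ℝ (Metric.closedBall (0 : ↥H14 →L[ℝ] (Fin 2 → ℝ)) 1) ∧
      ∃ U₁ U₂ : ↥H14 →L[ℝ] (Fin 2 → ℝ), U₁ ≠ U₂ ∧ ‖U₁‖ ≤ 1 ∧ ‖U₂‖ ≤ 1 ∧
        (∀ f : ↥H14, U₁ f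
          = ![(f : C(Fin 2, Fin 2 → ℝ)) 1 0, (f : C(Fin 2, Fin 2 → ℝ)) 0 1]) ∧
        (∀ f : ↥H14, U₂ f
          = ![-(f : C(Fin 2, Fin 2 → ℝ)) 1 0, (f : C(Fin 2, Fin 2 → ℝ)) 0 1]) ∧
        Φ = (1 / 2 : ℝ) • (U₁ + U₂) := by
  have hU₁ : ‖mixedEval 1‖ ≤ 1 := norm_mixedEval_le (by norm_num)
  have hU₂ : ‖mixedEval (-1)‖ ≤ 1 := norm_mixedEval_le (by norm_num)
  have hne : mixedEval 1 ≠ mixedEval (-1) := mixedEval_injective.ne (by norm_num)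
  have hmid : Φ = midpoint ℝ (mixedEval 1) (mixedEval (-1)) :=
    ContinuousLinearMap.ext fun f ↦ (hΦ f).trans (midpoint_mixedEval_apply 1 f).symm
  refine ⟨hmid ▸ midpoint_notMem_extremePoints (mem_closedBall_zero_iff.2 hU₁)
      (mem_closedBall_zero_iff.2 hU₂) hne, _, _, hne, hU₁, hU₂,
    fun f ↦ by simp [mixedEval_apply], fun f ↦ by simp [mixedEval_apply], ?_⟩
  rw [hmid, midpoint_eq_smul_add, invOf_eq_inv, one_div]
end

section
/- Let X be a compact convex subset of a Hausdorff locally convex space and E a Banach space. Let g : X → E be an affine map such that for every x* ∈ E* the composition x* ∘ g is continuous on X. Then g is norm-continuous on X. (Key step: if s_i → s in X but ∥g(s_i) − g(s)∥ ≥ ε, choose norming functionals in B_{E*} and extract a weak*-convergent subnet to derive a contradiction using that x* ∘ g is continuous and bounded nets of functionals converge uniformly on norm-compact sets.) -/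
/-!
Continuous linear forms separate the points of `E`, so the evaluation map
`k ↦ (φ ↦ φ k)` is a continuous injection of a compact set `K ⊆ E` into the Hausdorff space
`StrongDual → ℝ`, hence a homeomorphism onto its image: on `K` the weak topology is the norm
topology. A map into `K` that is weakly continuous is therefore norm-continuous.
-/

open Set Topology

section WeakContinuity

variable {R E : Type*} [Ring R] [TopologicalSpace R] [T2Space R]
  [AddCommGroup E] [TopologicalSpace E] [Module R E] [SeparatingDual R E]

theorem IsCompact.isClosedEmbedding_dualEval {K : Set E} (hK : IsCompact K) :
    IsClosedEmbedding (fun (k : K) (φ : StrongDual R E) => φ k) := by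
  have : CompactSpace K := isCompact_iff_compactSpace.mp hK
  refine Continuous.isClosedEmbedding
    (continuous_pi fun φ => φ.continuous.comp continuous_subtype_val) fun a b hab => ?_
  exact Subtype.ext <| (SeparatingDual.eq_iff_forall_dual_eq (R := R)).mpr (congrFun hab)

theorem continuousOn_of_isCompact_of_forall_continuousOn_dual_comp {X : Type*}
    [TopologicalSpace X] {f : X → E} {s : Set X} {K : Set E} (hK : IsCompact K)
    (hfK : MapsTo f s K) (hf : ∀ φ : StrongDual R E, ContinuousOn (fun x => φ (f x)) s) :
    ContinuousOn f s := by
  rw [continuousOn_iff_continuous_domRestrict]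
  have hfK' : Continuous (hfK.restrict f s K) := by
    rw [(hK.isClosedEmbedding_dualEval (R := R)).isInducing.continuous_iff]
    exact continuous_pi fun φ => (hf φ).domRestrict
  exact continuous_subtype_val.comp hfK'

end WeakContinuity

theorem stmt_16_general {V E : Type*} [TopologicalSpace V]
    [NormedAddCommGroup E] [NormedSpace ℝ E]
    (X : Set V)
    (g : V → E)
    (hweak : ∀ xs : E →L[ℝ] ℝ, ContinuousOn (fun v => xs (g v)) X)
    (hcomp : IsCompact (closure (g '' X))) :
    ContinuousOn g X :=
  continuousOn_of_isCompact_of_forall_continuousOn_dual_comp hcomp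
    (fun _ hx => subset_closure (mem_image_of_mem g hx)) hweak

/-- formalizable version: let `X` be a compact convex subset of a Hausdorff
locally convex space, `E` a Banach space and `g : X → E` affine such that `x* ∘ g` is
continuous for every `x* ∈ E*` and `g(X)` is relatively norm-compact. Then `g` is
norm-continuous on `X`. -/
theorem stmt_16 {V E : Type*} [AddCommGroup V] [Module ℝ V] [TopologicalSpace V]
    [IsTopologicalAddGroup V] [ContinuousSMul ℝ V] [T2Space V] [LocallyConvexSpace ℝ V]
    [NormedAddCommGroup E] [NormedSpace ℝ E] [CompleteSpace E]
    (X : Set V) (hX : IsCompact X) (hconv : Convex ℝ X)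
    (g : V → E)
    (haff : ∀ x ∈ X, ∀ y ∈ X, ∀ t : ℝ, t ∈ Set.Icc (0 : ℝ) 1 →
      g (t • x + (1 - t) • y) = t • g x + (1 - t) • g y)
    (hweak : ∀ xs : E →L[ℝ] ℝ, ContinuousOn (fun v => xs (g v)) X)
    (hcomp : IsCompact (closure (g '' X))) :
    ContinuousOn g X :=
  stmt_16_general X g hweak hcomp
end

section
/- Let E be a Banach space whose dual E* is strictly convex, K a compact Hausdorff space, H ⊆ C(K,E) a function space containing constants, t ∈ K, x* ∈ E* nonzero, and μ ∈ M(K,E*) with ∥μ∥ = ∥x*∥, μ(K) = x*, such that for every Borel A ⊆ K, |μ|(A) + |μ|(K∖A) = ∥μ(A)∥ + ∥μ(K∖A)∥ = ∥μ(A) + μ(K∖A)∥. Then there is a Radon probability measure σ on K with μ(A) = σ(A)·x* for all Borel A, i.e., μ = σ ⊗ x*. -/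
/-!
Since `‖μ A + μ Aᶜ‖ = ‖μ A‖ + ‖μ Aᶜ‖`, strict convexity puts `μ A` and `μ Aᶜ` on one ray, hence
`μ A` on the ray of `μ A + μ Aᶜ = x*`. Writing `μ A = σ(A) • x*`, the coefficient `σ(A) ≥ 0` is
the image of `μ` under a functional taking the value `1` at `x*`, so it is countably additive,
and `σ(K) = 1`.
-/

open MeasureTheory

theorem sameRay_of_norm_add_eq {F : Type*} [NormedAddCommGroup F] [NormedSpace ℝ F]
    (hsc : ∀ u v : F, u ≠ 0 → v ≠ 0 → ‖u + v‖ = ‖u‖ + ‖v‖ → ∃ c : ℝ, 0 < c ∧ v = c • u)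
    {u v : F} (h : ‖u + v‖ = ‖u‖ + ‖v‖) : SameRay ℝ u v := by
  rcases eq_or_ne u 0 with rfl | hu
  · exact SameRay.zero_left v
  rcases eq_or_ne v 0 with rfl | hv
  · exact SameRay.zero_right u
  obtain ⟨c, hc, rfl⟩ := hsc u v hu hv h
  exact SameRay.sameRay_pos_smul_right u hc

namespace MeasureTheory.VectorMeasure

variable {α F : Type*} [MeasurableSpace α] [NormedAddCommGroup F] [NormedSpace ℝ F]

theorem exists_isProbabilityMeasure_of_sameRay (μ : VectorMeasure α F) (hμ : μ Set.univ ≠ 0)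
    (hray : ∀ A, MeasurableSet A → SameRay ℝ (μ A) (μ Set.univ)) :
    ∃ σ : Measure α, IsProbabilityMeasure σ ∧
      ∀ A, MeasurableSet A → μ A = (σ A).toReal • μ Set.univ := by
  set x := μ Set.univ
  have hx : ‖x‖ ≠ 0 := norm_ne_zero_iff.mpr hμ
  obtain ⟨g₀, -, hg₀x⟩ := exists_dual_vector ℝ x hx
  set g : StrongDual ℝ F := ‖x‖⁻¹ • g₀
  have hgx : g x = 1 := by simp [g, hg₀x, hx]
  let ν : SignedMeasure α := μ.mapRange g.toLinearMap.toAddMonoidHom g.continuous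
  have hν : ∀ A, MeasurableSet A → 0 ≤ ν A ∧ μ A = ν A • x := by
    intro A hA
    obtain ⟨r, hr, hrx⟩ := (hray A hA).exists_nonneg_right hμ
    have hνA : ν A = r := by
      rw [show ν A = g (μ A) from rfl, hrx, g.map_smul, hgx, smul_eq_mul, mul_one]
    exact ⟨hνA ▸ hr, hνA ▸ hrx⟩
  have hνpos : 0 ≤[Set.univ] ν := by
    rw [restrict_le_restrict_iff _ _ MeasurableSet.univ]
    exact fun A hA _ => (hν A hA).1
  let σ := ν.toMeasureOfZeroLE Set.univ MeasurableSet.univ hνpos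
  have hσ : ∀ A, MeasurableSet A → (σ A).toReal = ν A := fun A hA => by
    rw [← measureReal_def, SignedMeasure.toMeasureOfZeroLE_real_apply _ hνpos MeasurableSet.univ hA,
      Set.univ_inter]
  refine ⟨σ, isProbabilityMeasure_iff_real.2 ?_, fun A hA => hσ A hA ▸ (hν A hA).2⟩
  rw [measureReal_def, hσ _ MeasurableSet.univ]
  exact hgx

end MeasureTheory.VectorMeasure

theorem stmt_18_general {K E : Type*} [MeasurableSpace K]
    [NormedAddCommGroup E] [NormedSpace ℝ E]
    (hsc : ∀ u v : E →L[ℝ] ℝ, u ≠ 0 → v ≠ 0 → ‖u + v‖ = ‖u‖ + ‖v‖ →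
      ∃ c : ℝ, 0 < c ∧ v = c • u)
    (xs : E →L[ℝ] ℝ) (hxs : xs ≠ 0)
    (μ : VectorMeasure K (E →L[ℝ] ℝ)) (τ : Measure K)
    (hμuniv : μ Set.univ = xs)
    (hvar : ∀ A : Set K, MeasurableSet A →
      ((τ A).toReal + (τ Aᶜ).toReal = ‖μ A‖ + ‖μ Aᶜ‖ ∧
        ‖μ A‖ + ‖μ Aᶜ‖ = ‖μ A + μ Aᶜ‖)) :
    ∃ σ : Measure K, IsProbabilityMeasure σ ∧
      ∀ A : Set K, MeasurableSet A → μ A = (σ A).toReal • xs := by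
  subst hμuniv
  refine μ.exists_isProbabilityMeasure_of_sameRay hxs fun A hA => ?_
  have hsplit : μ A + μ Aᶜ = μ Set.univ := by
    rw [← VectorMeasure.of_union disjoint_compl_right hA hA.compl, Set.union_compl_self]
  have hAAc : SameRay ℝ (μ A) (μ Aᶜ) := sameRay_of_norm_add_eq hsc (hvar A hA).2.symm
  simpa only [hsplit] using (SameRay.refl (μ A)).add_right hAAc

/-- let `E*` be strictly convex, `H ⊆ C(K,E)` a function space containing
constants, `x* ∈ E*` nonzero and `μ` an `E*`-valued measure with variation `τ = |μ|`,
total variation `‖μ‖ = ‖x*‖`, total mass `μ(K) = x*`, and such that for every Borel `A`,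
`|μ|(A) + |μ|(Aᶜ) = ‖μ(A)‖ + ‖μ(Aᶜ)‖ = ‖μ(A) + μ(Aᶜ)‖`. Then there is a probability
measure `σ` on `K` with `μ(A) = σ(A)·x*` for all Borel `A`, i.e. `μ = σ ⊗ x*`. -/
theorem stmt_18 {K E : Type*} [TopologicalSpace K] [CompactSpace K] [T2Space K]
    [MeasurableSpace K] [BorelSpace K]
    [NormedAddCommGroup E] [NormedSpace ℝ E]
    (hsc : ∀ u v : E →L[ℝ] ℝ, u ≠ 0 → v ≠ 0 → ‖u + v‖ = ‖u‖ + ‖v‖ →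
      ∃ c : ℝ, 0 < c ∧ v = c • u)
    (H : Submodule ℝ C(K, E))
    (hconst : ∀ x : E, (ContinuousMap.const K x) ∈ H)
    (t : K) (xs : E →L[ℝ] ℝ) (hxs : xs ≠ 0)
    (μ : VectorMeasure K (E →L[ℝ] ℝ)) (τ : Measure K) [IsFiniteMeasure τ]
    (hτnorm : (τ Set.univ).toReal = ‖xs‖)
    (hμuniv : μ Set.univ = xs)
    (hvar : ∀ A : Set K, MeasurableSet A →
      ((τ A).toReal + (τ Aᶜ).toReal = ‖μ A‖ + ‖μ Aᶜ‖ ∧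
        ‖μ A‖ + ‖μ Aᶜ‖ = ‖μ A + μ Aᶜ‖)) :
    ∃ σ : Measure K, IsProbabilityMeasure σ ∧
      ∀ A : Set K, MeasurableSet A → μ A = (σ A).toReal • xs :=
  stmt_18_general hsc xs hxs μ τ hμuniv hvar
end

section
/- If g : X → ℝ is an affine function of Baire class one on a compact convex subset X of a locally convex space (that is, g is the pointwise limit of a bounded sequence of continuous affine functions on X), then sup_X |g| = sup_{ext X} |g|. -/
open Set Filter Topology

set_option linter.unusedSectionVars false

namespace S19

variable {V : Type*} [AddCommGroup V] [Module ℝ V] [TopologicalSpace V]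
  [IsTopologicalAddGroup V] [ContinuousSMul ℝ V] [T2Space V] [LocallyConvexSpace ℝ V]

/-- finite convex combinations of `h j`, `j ≥ k`. -/
def FinComb (h : ℕ → V → ℝ) (k : ℕ) (ψ : V → ℝ) : Prop :=
  ∃ (N : ℕ) (μ : ℕ → ℝ), (∀ i, 0 ≤ μ i) ∧ (∀ i, μ i ≠ 0 → k ≤ i ∧ i < N) ∧
    (∑ i ∈ Finset.range N, μ i) = 1 ∧ ∀ x, ψ x = ∑ i ∈ Finset.range N, μ i * h i x

/-- uniform-on-X limits of finite convex combinations of `h j`, `j ≥ k`. -/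
def Mem (X : Set V) (h : ℕ → V → ℝ) (k : ℕ) (φ : V → ℝ) : Prop :=
  ∀ ε > 0, ∃ ψ, FinComb h k ψ ∧ ∀ x ∈ X, |φ x - ψ x| ≤ ε

variable {X : Set V} {h : ℕ → V → ℝ} {C : ℝ}

theorem finComb_single (h : ℕ → V → ℝ) (k : ℕ) : FinComb h k (h k) := by
  refine ⟨k + 1, fun i => if i = k then 1 else 0, ?_, ?_, ?_, ?_⟩
  · intro i; dsimp only; split <;> norm_num
  · intro i hi; by_cases hik : i = k
    · subst hik; omega
    · simp [hik] at hi
  · simp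
  · intro x; rw [Finset.sum_eq_single k]
    · simp
    · intro b _ hb; simp [hb]
    · intro hk; exact absurd (Finset.self_mem_range_succ k) hk

theorem Mem.single (X : Set V) (h : ℕ → V → ℝ) (k : ℕ) : Mem X h k (h k) := by
  intro ε hε
  exact ⟨h k, finComb_single h k, fun x _ => by simp [le_of_lt hε]⟩

theorem FinComb.mono {k l : ℕ} (hkl : k ≤ l) {ψ : V → ℝ} (hψ : FinComb h l ψ) :
    FinComb h k ψ := by
  obtain ⟨N, μ, h1, h2, h3, h4⟩ := hψ
  exact ⟨N, μ, h1, fun i hi => ⟨le_trans hkl (h2 i hi).1, (h2 i hi).2⟩, h3, h4⟩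

theorem Mem.mono {k l : ℕ} (hkl : k ≤ l) {φ : V → ℝ} (hφ : Mem X h l φ) : Mem X h k φ := by
  intro ε hε
  obtain ⟨ψ, h1, h2⟩ := hφ ε hε
  exact ⟨ψ, h1.mono hkl, h2⟩

theorem FinComb.le_of {k : ℕ} {ψ : V → ℝ} (hψ : FinComb h k ψ) {x : V} {M : ℝ}
    (hM : ∀ j, k ≤ j → h j x ≤ M) : ψ x ≤ M := by
  obtain ⟨N, μ, h1, h2, h3, h4⟩ := hψ
  rw [h4]
  calc ∑ i ∈ Finset.range N, μ i * h i x ≤ ∑ i ∈ Finset.range N, μ i * M := by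
        refine Finset.sum_le_sum fun i _ => ?_
        by_cases hi : μ i = 0
        · simp [hi]
        · exact mul_le_mul_of_nonneg_left (hM i (h2 i hi).1) (h1 i)
    _ = M := by rw [← Finset.sum_mul, h3, one_mul]

theorem FinComb.ge_of {k : ℕ} {ψ : V → ℝ} (hψ : FinComb h k ψ) {x : V} {M : ℝ}
    (hM : ∀ j, k ≤ j → M ≤ h j x) : M ≤ ψ x := by
  obtain ⟨N, μ, h1, h2, h3, h4⟩ := hψ
  rw [h4]
  calc M = ∑ i ∈ Finset.range N, μ i * M := by rw [← Finset.sum_mul, h3, one_mul]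
    _ ≤ ∑ i ∈ Finset.range N, μ i * h i x := by
        refine Finset.sum_le_sum fun i _ => ?_
        by_cases hi : μ i = 0
        · simp [hi]
        · exact mul_le_mul_of_nonneg_left (hM i (h2 i hi).1) (h1 i)

theorem Mem.le_of {k : ℕ} {φ : V → ℝ} (hφ : Mem X h k φ) {x : V} (hx : x ∈ X) {M : ℝ}
    (hM : ∀ j, k ≤ j → h j x ≤ M) : φ x ≤ M := by
  refine le_of_forall_pos_le_add fun ε hε => ?_
  obtain ⟨ψ, h1, h2⟩ := hφ ε hε
  have := h2 x hx
  have := h1.le_of hM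
  have := abs_le.1 (h2 x hx)
  linarith [this.1, this.2]

theorem Mem.ge_of {k : ℕ} {φ : V → ℝ} (hφ : Mem X h k φ) {x : V} (hx : x ∈ X) {M : ℝ}
    (hM : ∀ j, k ≤ j → M ≤ h j x) : M ≤ φ x := by
  have : ∀ ε > (0:ℝ), M - ε ≤ φ x := by
    intro ε hε
    obtain ⟨ψ, h1, h2⟩ := hφ ε hε
    have := h1.ge_of hM
    have := abs_le.1 (h2 x hx)
    linarith [this.1, this.2]
  by_contra hc
  push_neg at hc
  have := this ((M - φ x) / 2) (by linarith)
  linarith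

theorem Mem.abs_le {k : ℕ} {φ : V → ℝ} (hbdd : ∀ n, ∀ x ∈ X, |h n x| ≤ C)
    {x : V} (hx : x ∈ X) (hφ : Mem X h k φ) : |φ x| ≤ C := by
  rw [_root_.abs_le]
  constructor
  · exact hφ.ge_of hx fun j _ => (_root_.abs_le.1 (hbdd j x hx)).1
  · exact hφ.le_of hx fun j _ => (_root_.abs_le.1 (hbdd j x hx)).2


theorem FinComb.continuousOn (hcont : ∀ n, ContinuousOn (h n) X) {k : ℕ} {ψ : V → ℝ}
    (hψ : FinComb h k ψ) : ContinuousOn ψ X := by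
  obtain ⟨N, μ, _, _, _, h4⟩ := hψ
  have : ContinuousOn (fun x => ∑ i ∈ Finset.range N, μ i * h i x) X :=
    continuousOn_finset_sum _ fun i _ => (continuousOn_const.mul (hcont i))
  exact this.congr fun x _ => h4 x

theorem Mem.continuousOn (hcont : ∀ n, ContinuousOn (h n) X) {k : ℕ} {φ : V → ℝ}
    (hφ : Mem X h k φ) : ContinuousOn φ X := by
  have key : ∀ n : ℕ, ∃ ψ, FinComb h k ψ ∧ ∀ x ∈ X, |φ x - ψ x| ≤ 1 / (n + 1) := by
    intro n
    exact hφ (1 / (n + 1)) (by positivity)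
  choose ψ h1 h2 using key
  have hunif : TendstoUniformlyOn (fun n x => ψ n x) φ atTop X := by
    rw [Metric.tendstoUniformlyOn_iff]
    intro ε hε
    obtain ⟨n₀, hn₀⟩ := exists_nat_one_div_lt hε
    rw [eventually_atTop]
    refine ⟨n₀, fun n hn x hx => ?_⟩
    rw [Real.dist_eq]
    have h3 : (1:ℝ) / (n + 1) ≤ 1 / (n₀ + 1) := by
      apply one_div_le_one_div_of_le (by positivity)
      exact_mod_cast by omega
    exact lt_of_le_of_lt (le_trans (h2 n x hx) h3) hn₀
  exact hunif.continuousOn (Eventually.of_forall fun n => (h1 n).continuousOn hcont).frequently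

theorem FinComb.affine
    (haff : ∀ n, ∀ x ∈ X, ∀ y ∈ X, ∀ t : ℝ, t ∈ Set.Icc (0 : ℝ) 1 →
      h n (t • x + (1 - t) • y) = t * h n x + (1 - t) * h n y)
    {k : ℕ} {ψ : V → ℝ} (hψ : FinComb h k ψ) :
    ∀ x ∈ X, ∀ y ∈ X, ∀ t : ℝ, t ∈ Set.Icc (0 : ℝ) 1 →
      ψ (t • x + (1 - t) • y) = t * ψ x + (1 - t) * ψ y := by
  obtain ⟨N, μ, _, _, _, h4⟩ := hψ
  intro x hx y hy t ht
  rw [h4, h4, h4, Finset.mul_sum, Finset.mul_sum, ← Finset.sum_add_distrib]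
  refine Finset.sum_congr rfl fun i _ => ?_
  rw [haff i x hx y hy t ht]; ring

theorem Mem.affine (hconv : Convex ℝ X)
    (haff : ∀ n, ∀ x ∈ X, ∀ y ∈ X, ∀ t : ℝ, t ∈ Set.Icc (0 : ℝ) 1 →
      h n (t • x + (1 - t) • y) = t * h n x + (1 - t) * h n y)
    {k : ℕ} {φ : V → ℝ} (hφ : Mem X h k φ) :
    ∀ x ∈ X, ∀ y ∈ X, ∀ t : ℝ, t ∈ Set.Icc (0 : ℝ) 1 →
      φ (t • x + (1 - t) • y) = t * φ x + (1 - t) * φ y := by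
  intro x hx y hy t ht
  have hz : t • x + (1 - t) • y ∈ X := hconv hx hy ht.1 (by linarith [ht.2]) (by ring)
  have key : ∀ ε > (0:ℝ), |φ (t • x + (1 - t) • y) - (t * φ x + (1 - t) * φ y)| ≤ 2 * ε := by
    intro ε hε
    obtain ⟨ψ, h1, h2⟩ := hφ ε hε
    have e1 := h2 _ hz
    have e2 := h2 x hx
    have e3 := h2 y hy
    have e4 := h1.affine haff x hx y hy t ht
    have ht0 := ht.1
    have ht1 := ht.2
    calc |φ (t • x + (1 - t) • y) - (t * φ x + (1 - t) * φ y)|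
        = |(φ (t • x + (1 - t) • y) - ψ (t • x + (1 - t) • y))
            + (t * (ψ x - φ x) + (1 - t) * (ψ y - φ y))| := by rw [e4]; ring_nf
      _ ≤ |φ (t • x + (1 - t) • y) - ψ (t • x + (1 - t) • y)|
            + (|t * (ψ x - φ x)| + |(1 - t) * (ψ y - φ y)|) :=
          le_trans (abs_add_le _ _) (by gcongr; exact abs_add_le _ _)
      _ ≤ ε + (t * ε + (1 - t) * ε) := by
          refine add_le_add e1 (add_le_add ?_ ?_)
          · rw [abs_mul, abs_of_nonneg ht0, abs_sub_comm]
            exact mul_le_mul_of_nonneg_left e2 ht0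
          · rw [abs_mul, abs_of_nonneg (by linarith : (0:ℝ) ≤ 1 - t), abs_sub_comm]
            exact mul_le_mul_of_nonneg_left e3 (by linarith)
      _ ≤ 2 * ε := by nlinarith
  by_contra hc
  have habs : 0 < |φ (t • x + (1 - t) • y) - (t * φ x + (1 - t) * φ y)| := by
    rw [abs_pos, sub_ne_zero]; exact hc
  have := key (|φ (t • x + (1 - t) • y) - (t * φ x + (1 - t) * φ y)| / 4) (by linarith)
  linarith

theorem FinComb.combo {k : ℕ} {ψ₁ ψ₂ : V → ℝ} {t : ℝ} (ht : t ∈ Set.Icc (0:ℝ) 1)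
    (h1 : FinComb h k ψ₁) (h2 : FinComb h k ψ₂) :
    FinComb h k (fun x => t * ψ₁ x + (1 - t) * ψ₂ x) := by
  obtain ⟨N₁, μ₁, a1, b1, c1, d1⟩ := h1
  obtain ⟨N₂, μ₂, a2, b2, c2, d2⟩ := h2
  have hsub1 : Finset.range N₁ ⊆ Finset.range (max N₁ N₂) :=
    Finset.range_subset_range.2 (le_max_left _ _)
  have hsub2 : Finset.range N₂ ⊆ Finset.range (max N₁ N₂) :=
    Finset.range_subset_range.2 (le_max_right _ _)
  have hz1 : ∀ i ∈ Finset.range (max N₁ N₂), i ∉ Finset.range N₁ → μ₁ i = 0 := by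
    intro i _ hi; by_contra hne; exact hi (Finset.mem_range.2 (b1 i hne).2)
  have hz2 : ∀ i ∈ Finset.range (max N₁ N₂), i ∉ Finset.range N₂ → μ₂ i = 0 := by
    intro i _ hi; by_contra hne; exact hi (Finset.mem_range.2 (b2 i hne).2)
  refine ⟨max N₁ N₂, fun i => t * μ₁ i + (1 - t) * μ₂ i, ?_, ?_, ?_, ?_⟩
  · intro i
    dsimp only
    exact add_nonneg (mul_nonneg ht.1 (a1 i)) (mul_nonneg (by linarith [ht.2]) (a2 i))
  · intro i hi
    dsimp only at hi
    by_cases e1 : μ₁ i = 0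
    · by_cases e2 : μ₂ i = 0
      · exfalso; apply hi; rw [e1, e2]; ring
      · exact ⟨(b2 i e2).1, lt_of_lt_of_le (b2 i e2).2 (le_max_right _ _)⟩
    · exact ⟨(b1 i e1).1, lt_of_lt_of_le (b1 i e1).2 (le_max_left _ _)⟩
  · rw [Finset.sum_add_distrib, ← Finset.mul_sum, ← Finset.mul_sum,
      ← Finset.sum_subset hsub1 hz1, ← Finset.sum_subset hsub2 hz2, c1, c2]
    ring
  · intro x
    dsimp only
    rw [d1, d2, Finset.mul_sum, Finset.mul_sum]
    rw [Finset.sum_subset hsub1 (fun i hi hni => by rw [hz1 i hi hni]; ring),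
      Finset.sum_subset hsub2 (fun i hi hni => by rw [hz2 i hi hni]; ring),
      ← Finset.sum_add_distrib]
    exact Finset.sum_congr rfl fun i _ => by ring

theorem Mem.combo {k : ℕ} {φ₁ φ₂ : V → ℝ} {t : ℝ} (ht : t ∈ Set.Icc (0:ℝ) 1)
    (h1 : Mem X h k φ₁) (h2 : Mem X h k φ₂) :
    Mem X h k (fun x => t * φ₁ x + (1 - t) * φ₂ x) := by
  intro ε hε
  obtain ⟨ψ₁, f1, g1⟩ := h1 ε hε
  obtain ⟨ψ₂, f2, g2⟩ := h2 ε hε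
  refine ⟨_, f1.combo ht f2, fun x hx => ?_⟩
  have e1 := g1 x hx
  have e2 := g2 x hx
  have ht0 := ht.1; have ht1 := ht.2
  calc |t * φ₁ x + (1 - t) * φ₂ x - (t * ψ₁ x + (1 - t) * ψ₂ x)|
      = |t * (φ₁ x - ψ₁ x) + (1 - t) * (φ₂ x - ψ₂ x)| := by ring_nf
    _ ≤ |t * (φ₁ x - ψ₁ x)| + |(1 - t) * (φ₂ x - ψ₂ x)| := abs_add_le _ _
    _ ≤ t * ε + (1 - t) * ε := by
        rw [abs_mul, abs_mul, abs_of_nonneg ht0, abs_of_nonneg (by linarith : (0:ℝ) ≤ 1 - t)]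
        exact add_le_add (mul_le_mul_of_nonneg_left e1 ht0)
          (mul_le_mul_of_nonneg_left e2 (by linarith))
    _ = ε := by ring

theorem Mem.of_unif {k : ℕ} {φ : V → ℝ}
    (happ : ∀ ε > (0:ℝ), ∃ φ', Mem X h k φ' ∧ ∀ x ∈ X, |φ x - φ' x| ≤ ε) :
    Mem X h k φ := by
  intro ε hε
  obtain ⟨φ', hmem, hclose⟩ := happ (ε / 2) (by linarith)
  obtain ⟨ψ, h1, h2⟩ := hmem (ε / 2) (by linarith)
  refine ⟨ψ, h1, fun x hx => ?_⟩
  calc |φ x - ψ x| ≤ |φ x - φ' x| + |φ' x - ψ x| := abs_sub_le _ _ _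
    _ ≤ ε / 2 + ε / 2 := add_le_add (hclose x hx) (h2 x hx)
    _ = ε := by ring
theorem summable_geom_of_bdd {a : ℕ → ℝ} (hC : ∀ j, |a j| ≤ C) :
    Summable (fun j => (1/2:ℝ)^(j+1) * a j) := by
  refine Summable.of_norm_bounded (g := fun j => (1/2:ℝ)^(j+1) * C) ?_ ?_
  · exact Summable.congr ((summable_geometric_two.mul_right C).mul_right (1/2))
      (fun j => by ring)
  · intro j
    rw [Real.norm_eq_abs, abs_mul, abs_of_nonneg (by positivity : (0:ℝ) ≤ (1/2:ℝ)^(j+1))]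
    exact mul_le_mul_of_nonneg_left (hC j) (by positivity)

theorem geom_tsum_le_one : ∑' j : ℕ, (1/2:ℝ)^(j+1) = 1 := by
  have : ∀ j : ℕ, (1/2:ℝ)^(j+1) = (1/2) * (1/2)^j := fun j => by ring
  rw [tsum_congr this, tsum_mul_left, tsum_geometric_two]
  norm_num

theorem geom_tsum_abs_le {a : ℕ → ℝ} (hC : ∀ j, |a j| ≤ C) :
    |∑' j, (1/2:ℝ)^(j+1) * a j| ≤ C := by
  have hs := summable_geom_of_bdd hC
  have h1 : |∑' j, (1/2:ℝ)^(j+1) * a j| ≤ ∑' j, ‖(1/2:ℝ)^(j+1) * a j‖ := by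
    rw [← Real.norm_eq_abs]
    exact norm_tsum_le_tsum_norm hs.norm
  refine le_trans h1 ?_
  have h2 : ∑' j, ‖(1/2:ℝ)^(j+1) * a j‖ ≤ ∑' j, (1/2:ℝ)^(j+1) * C := by
    refine Summable.tsum_le_tsum ?_ hs.norm ?_
    · intro j
      rw [Real.norm_eq_abs, abs_mul, abs_of_nonneg (by positivity : (0:ℝ) ≤ (1/2:ℝ)^(j+1))]
      exact mul_le_mul_of_nonneg_left (hC j) (by positivity)
    · exact Summable.congr ((summable_geometric_two.mul_right C).mul_right (1/2))
        (fun j => by ring)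
  refine le_trans h2 ?_
  rw [tsum_mul_right, geom_tsum_le_one, one_mul]

theorem Mem.congr {k : ℕ} {φ φ' : V → ℝ} (hφ : Mem X h k φ) (he : ∀ x ∈ X, φ x = φ' x) :
    Mem X h k φ' := by
  intro ε hε
  obtain ⟨ψ, h1, h2⟩ := hφ ε hε
  exact ⟨ψ, h1, fun x hx => by rw [← he x hx]; exact h2 x hx⟩

theorem Mem.nest : ∀ (n k : ℕ) (ψ : ℕ → V → ℝ), (∀ j, Mem X h (k + j) (ψ j)) →
    Mem X h k (fun x => ∑ j ∈ Finset.range n, (1/2:ℝ)^(j+1) * ψ j x + (1/2:ℝ)^n * ψ n x) := by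
  intro n
  induction n with
  | zero =>
    intro k ψ hψ
    have h0 : Mem X h k (ψ 0) := hψ 0
    exact h0.congr fun x _ => by simp
  | succ n ih =>
    intro k ψ hψ
    have inner := ih (k+1) (fun j => ψ (j+1)) (fun j => by
      have := hψ (j+1); rwa [show k + (j+1) = k + 1 + j by omega] at this)
    have comb := Mem.combo (t := (1/2:ℝ)) ⟨by norm_num, by norm_num⟩ (hψ 0)
      (inner.mono (Nat.le_succ k))
    refine comb.congr fun x _ => ?_
    rw [Finset.sum_range_succ']
    have hA : (1 - 1/2 : ℝ) * (∑ j ∈ Finset.range n, (1/2:ℝ)^(j+1) * ψ (j+1) x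
        + (1/2:ℝ)^n * ψ (n+1) x)
        = (∑ j ∈ Finset.range n, (1/2:ℝ)^(j+1+1) * ψ (j+1) x)
          + (1/2:ℝ)^(n+1) * ψ (n+1) x := by
      rw [mul_add, Finset.mul_sum]
      congr 1
      · exact Finset.sum_congr rfl fun j _ => by ring
      · ring
    rw [hA]
    ring

theorem Mem.geo (hbdd : ∀ n, ∀ x ∈ X, |h n x| ≤ C) (hC : 0 ≤ C)
    {k : ℕ} {ψ : ℕ → V → ℝ} (hψ : ∀ j, Mem X h (k + j) (ψ j)) :
    Mem X h k (fun x => ∑' j, (1/2:ℝ)^(j+1) * ψ j x) := by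
  refine Mem.of_unif fun ε hε => ?_
  obtain ⟨n, hn⟩ := exists_pow_lt_of_lt_one
    (show (0:ℝ) < ε/(2*(C+1)) by positivity) (show (1/2:ℝ) < 1 by norm_num)
  refine ⟨_, Mem.nest n k ψ hψ, fun x hx => ?_⟩
  have hb : ∀ j, |ψ j x| ≤ C := fun j => (hψ j).abs_le hbdd hx
  have hs : Summable (fun j => (1/2:ℝ)^(j+1) * ψ j x) := summable_geom_of_bdd hb
  have hsplit := hs.sum_add_tsum_nat_add n
  have htail : ∑' i, (1/2:ℝ)^(i+n+1) * ψ (i+n) x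
      = (1/2:ℝ)^n * ∑' i, (1/2:ℝ)^(i+1) * ψ (i+n) x := by
    rw [← tsum_mul_left]
    exact tsum_congr fun i => by rw [show i+n+1 = n + (i+1) by omega, pow_add]; ring
  have htail2 : |∑' i, (1/2:ℝ)^(i+1) * ψ (i+n) x| ≤ C :=
    geom_tsum_abs_le fun i => hb (i+n)
  have hpow : (0:ℝ) ≤ (1/2:ℝ)^n := by positivity
  calc |(∑' j, (1/2:ℝ)^(j+1) * ψ j x)
        - (∑ j ∈ Finset.range n, (1/2:ℝ)^(j+1) * ψ j x + (1/2:ℝ)^n * ψ n x)|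
      = |(∑' i, (1/2:ℝ)^(i+n+1) * ψ (i+n) x) - (1/2:ℝ)^n * ψ n x| := by
        rw [← hsplit]
        congr 1
        ring
    _ ≤ |∑' i, (1/2:ℝ)^(i+n+1) * ψ (i+n) x| + |(1/2:ℝ)^n * ψ n x| := abs_sub _ _
    _ ≤ (1/2:ℝ)^n * C + (1/2:ℝ)^n * C := by
        refine add_le_add ?_ ?_
        · rw [htail, abs_mul, abs_of_nonneg hpow]
          exact mul_le_mul_of_nonneg_left htail2 hpow
        · rw [abs_mul, abs_of_nonneg hpow]
          exact mul_le_mul_of_nonneg_left (hb n) hpow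
    _ ≤ ε := by
        have hC1 : (0:ℝ) < C + 1 := by linarith
        have h4 : (1/2:ℝ)^n * (C+1) < ε/2 := by
          have h5 := mul_lt_mul_of_pos_right hn hC1
          have h6 : ε/(2*(C+1))*(C+1) = ε/2 := by field_simp
          rwa [h6] at h5
        nlinarith [h4, hpow, hC]
/-- Bauer maximum principle for affine continuous functions. -/
theorem bauer (hX : IsCompact X) (hne : X.Nonempty) (φ : V → ℝ)
    (hφc : ContinuousOn φ X)
    (hφa : ∀ x ∈ X, ∀ y ∈ X, ∀ t : ℝ, t ∈ Set.Icc (0 : ℝ) 1 →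
      φ (t • x + (1 - t) • y) = t * φ x + (1 - t) * φ y) :
    ∃ b ∈ X.extremePoints ℝ, ∀ x ∈ X, φ x ≤ φ b := by
  obtain ⟨z, hzX, hz⟩ := hX.exists_isMaxOn hne hφc
  have hzmax : ∀ x ∈ X, φ x ≤ φ z := fun x hx => hz hx
  set F : Set V := X ∩ φ ⁻¹' {φ z} with hF
  have hFsub : F ⊆ X := inter_subset_left
  have hFne : F.Nonempty := ⟨z, hzX, rfl⟩
  have hFclosed : IsClosed F := hφc.preimage_isClosed_of_isClosed hX.isClosed isClosed_singleton
  have hFcomp : IsCompact F := hX.of_isClosed_subset hFclosed hFsub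
  have hFext : IsExtreme ℝ X F := by
    refine ⟨hFsub, ?_⟩
    rintro x₁ hx₁ x₂ hx₂ x ⟨hxX, hxφ⟩ hseg
    obtain ⟨a, b, ha, hb, hab, rfl⟩ := hseg
    have hb' : b = 1 - a := by linarith
    subst hb'
    have haI : a ∈ Set.Icc (0:ℝ) 1 := ⟨le_of_lt ha, by linarith⟩
    have hsum := hφa x₁ hx₁ x₂ hx₂ a haI
    have hval : φ (a • x₁ + (1 - a) • x₂) = φ z := hxφ
    have h1 : φ x₁ ≤ φ z := hzmax x₁ hx₁
    have h2 : φ x₂ ≤ φ z := hzmax x₂ hx₂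
    have e1 : φ x₁ = φ z := by nlinarith
    have e2 : φ x₂ = φ z := by nlinarith
    exact ⟨hx₁, e1⟩
  obtain ⟨e, he⟩ := hFcomp.extremePoints_nonempty hFne
  refine ⟨e, hFext.extremePoints_subset_extremePoints he, ?_⟩
  have heF : e ∈ F := extremePoints_subset he
  intro x hx
  rw [show φ e = φ z from heF.2]
  exact hzmax x hx
theorem simons_main (hX : IsCompact X) (hconv : Convex ℝ X) (hne : X.Nonempty)
    (g : V → ℝ)
    (haff : ∀ n, ∀ x ∈ X, ∀ y ∈ X, ∀ t : ℝ, t ∈ Set.Icc (0 : ℝ) 1 →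
      h n (t • x + (1 - t) • y) = t * h n x + (1 - t) * h n y)
    (hcont : ∀ n, ContinuousOn (h n) X)
    (hbdd : ∀ n, ∀ x ∈ X, |h n x| ≤ C)
    (hlim : ∀ x ∈ X, Filter.Tendsto (fun n => h n x) Filter.atTop (nhds (g x))) :
    ∀ x ∈ X, ∀ ε : ℝ, 0 < ε → ∃ b ∈ X.extremePoints ℝ, g x - 2*ε ≤ g b := by
  intro x hx ε hε
  obtain ⟨x₀, hx₀⟩ := hne
  have hne' : X.Nonempty := ⟨x₀, hx₀⟩
  have hC : 0 ≤ C := le_trans (abs_nonneg _) (hbdd 0 x₀ hx₀)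
  -- choose m with tail lower bound at x
  obtain ⟨m, hm⟩ := Metric.tendsto_atTop.1 (hlim x hx) ε hε
  have hmge : ∀ j, m ≤ j → g x - ε ≤ h j x := by
    intro j hj
    have := hm j hj
    rw [Real.dist_eq] at this
    linarith [(abs_lt.1 this).1]
  -- sup over X
  set SX : (V → ℝ) → ℝ := fun f => sSup (f '' X) with hSXdef
  have hub : ∀ (f : V → ℝ) (M : ℝ), (∀ y ∈ X, f y ≤ M) → SX f ≤ M := by
    intro f M hf
    refine csSup_le (hne'.image f) ?_
    rintro r ⟨y, hy, rfl⟩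
    exact hf y hy
  have hge : ∀ (f : V → ℝ) (M : ℝ), (∀ y ∈ X, f y ≤ M) → ∀ y ∈ X, f y ≤ SX f := by
    intro f M hf y hy
    refine le_csSup ⟨M, ?_⟩ (mem_image_of_mem f hy)
    rintro r ⟨z, hz, rfl⟩
    exact hf z hz
  have hcong : ∀ (f f' : V → ℝ), (∀ y ∈ X, f y = f' y) → SX f = SX f' := by
    intro f f' hf
    show sSup (f '' X) = sSup (f' '' X)
    rw [image_congr hf]
  -- the near-minimizing step
  have hex : ∀ (prev : V → ℝ) (k : ℕ), ∃ v, Mem X h (m + k) v ∧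
      ((∀ y ∈ X, |prev y| ≤ C) → ∀ u, Mem X h (m + k) u →
        SX (fun y => prev y + (1/2:ℝ)^(k+1) * v y)
          ≤ SX (fun y => prev y + (1/2:ℝ)^(k+1) * u y) + ε * (1/4:ℝ)^(k+1)) := by
    intro prev k
    by_cases hbp : ∀ y ∈ X, |prev y| ≤ C
    · set A : Set ℝ :=
        {r | ∃ u, Mem X h (m+k) u ∧ SX (fun y => prev y + (1/2:ℝ)^(k+1) * u y) = r} with hA
      have hAne : A.Nonempty := ⟨_, ⟨h (m+k), Mem.single X h (m+k), rfl⟩⟩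
      have hAbdd : BddBelow A := by
        refine ⟨-(C + C), ?_⟩
        rintro r ⟨u, hu, rfl⟩
        have hubnd : ∀ y ∈ X, prev y + (1/2:ℝ)^(k+1) * u y ≤ C + C := by
          intro y hy
          have h1 := abs_le.1 (hbp y hy)
          have h2 := abs_le.1 (hu.abs_le hbdd hy)
          have hw : (0:ℝ) < (1/2:ℝ)^(k+1) := by positivity
          have hw1 : ((1:ℝ)/2)^(k+1) ≤ 1 := pow_le_one₀ (by norm_num) (by norm_num)
          nlinarith [h2.1, h2.2, h1.2]
        have hlow := hge _ _ hubnd x₀ hx₀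
        have h1 := abs_le.1 (hbp x₀ hx₀)
        have h2 := abs_le.1 (hu.abs_le hbdd hx₀)
        have hw : (0:ℝ) < (1/2:ℝ)^(k+1) := by positivity
        have hw1 : ((1:ℝ)/2)^(k+1) ≤ 1 := pow_le_one₀ (by norm_num) (by norm_num)
        nlinarith [h2.1, h2.2, h1.1]
      obtain ⟨r, hrA, hrlt⟩ := Real.lt_sInf_add_pos hAne
        (show (0:ℝ) < ε * (1/4:ℝ)^(k+1) by positivity)
      obtain ⟨v, hv, rfl⟩ := hrA
      refine ⟨v, hv, fun _ u hu => ?_⟩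
      have hle := csInf_le hAbdd (show _ ∈ A from ⟨u, hu, rfl⟩)
      linarith
    · exact ⟨h (m+k), Mem.single X h (m+k), fun hc => absurd hc hbp⟩
  choose Fc hFc using hex
  -- the recursive construction
  let seq : ℕ → ((V → ℝ) × (V → ℝ)) := fun n => Nat.rec
    (⟨Fc (fun _ => 0) 0, fun y => (1/2:ℝ)^(0+1) * Fc (fun _ => 0) 0 y⟩)
    (fun k ih => ⟨Fc ih.2 (k+1), fun y => ih.2 y + (1/2:ℝ)^(k+1+1) * Fc ih.2 (k+1) y⟩) n
  let φ : ℕ → V → ℝ := fun k => (seq k).1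
  let p : ℕ → V → ℝ := fun k => (seq k).2
  have hphi0 : φ 0 = Fc (fun _ => 0) 0 := rfl
  have hp0 : ∀ y, p 0 y = (1/2:ℝ)^(0+1) * φ 0 y := fun y => rfl
  have hphiS : ∀ k, φ (k+1) = Fc (p k) (k+1) := fun k => rfl
  have hpS : ∀ k y, p (k+1) y = p k y + (1/2:ℝ)^(k+1+1) * φ (k+1) y := fun k y => rfl
  have Hphi : ∀ k, Mem X h (m + k) (φ k) := by
    intro k
    cases k with
    | zero => exact (hFc (fun _ => 0) 0).1
    | succ k => exact (hFc (p k) (k+1)).1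
  have Hpb : ∀ k, ∀ y ∈ X, |p k y| ≤ (1 - (1/2:ℝ)^(k+1)) * C := by
    intro k
    induction k with
    | zero =>
      intro y hy
      rw [hp0 y, abs_mul, abs_of_nonneg (show (0:ℝ) ≤ (1/2:ℝ)^(0+1) by positivity)]
      have := (Hphi 0).abs_le hbdd hy
      have e : (1 - (1/2:ℝ)^(0+1)) * C = (1/2:ℝ)^(0+1) * C := by norm_num
      rw [e]
      exact mul_le_mul_of_nonneg_left this (by positivity)
    | succ k ih =>
      intro y hy
      rw [hpS k y]
      have h1 := ih y hy
      have h2 := (Hphi (k+1)).abs_le hbdd hy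
      have hpow : (1/2:ℝ)^(k+1+1) = (1/2:ℝ)^(k+1) * (1/2) := by ring
      have habs := abs_add_le (p k y) ((1/2:ℝ)^(k+1+1) * φ (k+1) y)
      have h3 : |(1/2:ℝ)^(k+1+1) * φ (k+1) y| = (1/2:ℝ)^(k+1+1) * |φ (k+1) y| := by
        rw [abs_mul, abs_of_nonneg (show (0:ℝ) ≤ (1/2:ℝ)^(k+1+1) by positivity)]
      have h4 : (0:ℝ) < (1/2:ℝ)^(k+1+1) := by positivity
      nlinarith [h2, h1, habs, h3, h4]
  have HpC : ∀ k, ∀ y ∈ X, |p k y| ≤ C := by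
    intro k y hy
    have h1 := Hpb k y hy
    have h2 : (0:ℝ) ≤ (1/2:ℝ)^(k+1) := by positivity
    nlinarith [mul_nonneg h2 hC]
  -- tail functions
  let Q : ℕ → V → ℝ := fun k y => ∑' i, (1/2:ℝ)^(i+1) * φ (k+i) y
  have HQmem : ∀ k, Mem X h (m+k) (Q k) := by
    intro k
    refine Mem.geo hbdd hC (fun j => ?_)
    have := Hphi (k+j)
    rwa [show m+(k+j) = m+k+j by omega] at this
  have HQabs : ∀ k, ∀ y ∈ X, |Q k y| ≤ C := fun k y hy => (HQmem k).abs_le hbdd hy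
  have Hsplit : ∀ k, ∀ y ∈ X, Q k y = (1/2) * φ k y + (1/2) * Q (k+1) y := by
    intro k y hy
    have hsum : Summable (fun i => (1/2:ℝ)^(i+1) * φ (k+i) y) :=
      summable_geom_of_bdd (fun i => (Hphi (k+i)).abs_le hbdd hy)
    have h0 := hsum.tsum_eq_zero_add
    show (∑' i, (1/2:ℝ)^(i+1) * φ (k+i) y) = _
    rw [h0]
    congr 1
    · norm_num
    · rw [show Q (k+1) y = ∑' i, (1/2:ℝ)^(i+1) * φ ((k+1)+i) y from rfl, ← tsum_mul_left]
      exact tsum_congr fun b => by rw [show k+(b+1) = (k+1)+b by omega]; ring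
  have HE : ∀ k, ∀ y ∈ X, Q 0 y = p k y + (1/2:ℝ)^(k+1) * Q (k+1) y := by
    intro k
    induction k with
    | zero =>
      intro y hy
      rw [Hsplit 0 y hy, hp0 y]
      norm_num
    | succ k ih =>
      intro y hy
      rw [ih y hy, Hsplit (k+1) y hy, hpS k y]
      ring
  have Hple : ∀ k, ∀ y ∈ X, p k y ≤ SX (p k) :=
    fun k => hge (p k) C (fun y hy => le_trans (le_abs_self _) (HpC k y hy))
  have HSle : ∀ y ∈ X, Q 0 y ≤ SX (Q 0) :=
    hge (Q 0) C (fun y hy => le_trans (le_abs_self _) (HQabs 0 y hy))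
  -- the key invariant
  have Hinv : ∀ k, SX (p k) ≤ (1 - (1/2:ℝ)^(k+1)) * SX (Q 0)
      + (1/2:ℝ)^(k+1) * (ε * (1 - (1/2:ℝ)^(k+1))) := by
    intro k
    induction k with
    | zero =>
      have h1 := (hFc (fun _ => 0) 0).2 (fun y _ => by simpa using hC) (Q 0) (HQmem 0)
      have e1 : SX (fun y => (fun _ => (0:ℝ)) y + (1/2:ℝ)^(0+1) * Fc (fun _ => 0) 0 y)
          = SX (p 0) := hcong _ _ (fun y hy => by rw [hp0 y, hphi0]; ring)
      rw [e1] at h1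
      have h2 : SX (fun y => (0:ℝ) + (1/2:ℝ)^(0+1) * Q 0 y)
          ≤ (1/2) * SX (Q 0) := by
        refine hub _ _ (fun y hy => ?_)
        have := HSle y hy
        show (0:ℝ) + (1/2:ℝ)^(0+1) * Q 0 y ≤ (1/2) * SX (Q 0)
        norm_num
        linarith
      have ea : ((1:ℝ)/2)^(0+1) = 1/2 := by norm_num
      have eb : ((1:ℝ)/4)^(0+1) = 1/4 := by norm_num
      rw [ea]
      rw [eb] at h1
      have h1' := le_trans h1 (add_le_add_left h2 _)
      nlinarith [h1']
    | succ k ih =>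
      have h1 := (hFc (p k) (k+1)).2 (HpC k) (Q (k+1)) (HQmem (k+1))
      have e1 : SX (fun y => p k y + (1/2:ℝ)^(k+1+1) * Fc (p k) (k+1) y)
          = SX (p (k+1)) := hcong _ _ (fun y hy => by rw [hpS k y, hphiS k])
      rw [e1] at h1
      have h2 : SX (fun y => p k y + (1/2:ℝ)^(k+1+1) * Q (k+1) y)
          ≤ (SX (p k) + SX (Q 0))/2 := by
        refine hub _ _ (fun y hy => ?_)
        have hEy := HE k y hy
        have ha := Hple k y hy
        have hb := HSle y hy
        have harith : p k y + (1/2:ℝ)^(k+1+1) * Q (k+1) y = (p k y + Q 0 y)/2 := by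
          have e : (1/2:ℝ)^(k+1+1) * Q (k+1) y
              = (1/2) * ((1/2:ℝ)^(k+1) * Q (k+1) y) := by ring
          rw [e, show (1/2:ℝ)^(k+1) * Q (k+1) y = Q 0 y - p k y by linarith]
          ring
        rw [harith]
        linarith
      set c : ℝ := (1/2:ℝ)^(k+1) with hc
      have hc2 : (1/4:ℝ)^(k+1+1) = c^2 * (1/4) := by
        have e1 : c^2 = (1/4:ℝ)^(k+1) := by
          rw [hc, ← pow_mul, mul_comm (k+1) 2, pow_mul]
          norm_num
        rw [pow_succ, e1]
      have hcS : (1/2:ℝ)^(k+1+1) = c * (1/2) := by rw [hc]; ring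
      have key : ((1-c) * SX (Q 0) + c*(ε*(1-c)) + SX (Q 0))/2 + ε*(c^2 * (1/4))
          = (1 - c*(1/2)) * SX (Q 0) + (c*(1/2)) * (ε * (1 - c*(1/2))) := by ring
      have h4 : SX (p (k+1)) ≤ (SX (p k) + SX (Q 0))/2 + ε * (c^2 * (1/4)) := by
        rw [← hc2]
        linarith
      rw [hcS]
      linarith
  -- Bauer's maximum principle applied to Q 0
  obtain ⟨b, hbext, hbmax⟩ := bauer hX hne' (Q 0)
    ((HQmem 0).continuousOn hcont) ((HQmem 0).affine hconv haff)
  have hbX : b ∈ X := extremePoints_subset hbext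
  have hSb : SX (Q 0) = Q 0 b := le_antisymm (hub _ _ hbmax) (HSle b hbX)
  have Htail : ∀ k, SX (Q 0) - ε ≤ Q (k+1) b := by
    intro k
    have hEy := HE k b hbX
    have h2 := Hple k b hbX
    have h3 := Hinv k
    have hcpos : (0:ℝ) < (1/2:ℝ)^(k+1) := by positivity
    have h4 : (1/2:ℝ)^(k+1) * (SX (Q 0) - ε) ≤ (1/2:ℝ)^(k+1) * Q (k+1) b := by
      nlinarith [mul_nonneg (mul_nonneg hcpos.le hcpos.le) hε.le]
    exact le_of_mul_le_mul_left h4 hcpos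
  have hgb : SX (Q 0) - ε ≤ g b := by
    refine le_of_forall_pos_le_add fun ε' hε' => ?_
    obtain ⟨K, hK⟩ := Metric.tendsto_atTop.1 (hlim b hbX) ε' hε'
    have hup : ∀ j, m + (K+1) ≤ j → h j b ≤ g b + ε' := by
      intro j hj
      have := hK j (by omega)
      rw [Real.dist_eq] at this
      linarith [(abs_lt.1 this).2]
    have hQle := (HQmem (K+1)).le_of hbX hup
    linarith [Htail K]
  have hq0 : g x - ε ≤ Q 0 x := (HQmem 0).ge_of hx (fun j hj => hmge j (by omega))
  have hq1 : Q 0 x ≤ SX (Q 0) := HSle x hx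
  exact ⟨b, hbext, by linarith⟩
end S19


/-- simplified formalizable version: if `g : X → ℝ` is an affine function of
Baire class one on a compact convex subset `X` of a Hausdorff locally convex space
(pointwise limit of a uniformly bounded sequence of continuous affine functions), then
`sup_X |g| = sup_{ext X} |g|`. -/
theorem stmt_19 {V : Type*} [AddCommGroup V] [Module ℝ V] [TopologicalSpace V]
    [IsTopologicalAddGroup V] [ContinuousSMul ℝ V] [T2Space V] [LocallyConvexSpace ℝ V]
    (X : Set V) (hX : IsCompact X) (hconv : Convex ℝ X) (hne : X.Nonempty)
    (g : V → ℝ) (h : ℕ → V → ℝ) (C : ℝ)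
    (haff : ∀ n, ∀ x ∈ X, ∀ y ∈ X, ∀ t : ℝ, t ∈ Set.Icc (0 : ℝ) 1 →
      h n (t • x + (1 - t) • y) = t * h n x + (1 - t) * h n y)
    (hcont : ∀ n, ContinuousOn (h n) X)
    (hbdd : ∀ n, ∀ x ∈ X, |h n x| ≤ C)
    (hlim : ∀ x ∈ X, Filter.Tendsto (fun n => h n x) Filter.atTop (nhds (g x))) :
    sSup ((fun x => |g x|) '' X) = sSup ((fun x => |g x|) '' Set.extremePoints ℝ X) := by
  classical
  obtain ⟨x₀, hx₀⟩ := hne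
  have hne' : X.Nonempty := ⟨x₀, hx₀⟩
  have hC : 0 ≤ C := le_trans (abs_nonneg _) (hbdd 0 x₀ hx₀)
  have hgabs : ∀ x ∈ X, |g x| ≤ C := by
    intro x hx
    have habs : Filter.Tendsto (fun n => |h n x|) Filter.atTop (nhds |g x|) := (hlim x hx).abs
    exact le_of_tendsto habs (Filter.Eventually.of_forall fun n => hbdd n x hx)
  have hextne : (Set.extremePoints ℝ X).Nonempty := hX.extremePoints_nonempty hne'
  have hsub : Set.extremePoints ℝ X ⊆ X := extremePoints_subset
  have hbddX : BddAbove ((fun x => |g x|) '' X) := by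
    refine ⟨C, ?_⟩
    rintro r ⟨y, hy, rfl⟩
    exact hgabs y hy
  have hbddE : BddAbove ((fun x => |g x|) '' Set.extremePoints ℝ X) := by
    refine ⟨C, ?_⟩
    rintro r ⟨y, hy, rfl⟩
    exact hgabs y (hsub hy)
  have hEneim : ((fun x => |g x|) '' Set.extremePoints ℝ X).Nonempty := hextne.image _
  refine le_antisymm ?_ (csSup_le_csSup hbddX hEneim (Set.image_mono hsub))
  refine csSup_le (hne'.image _) ?_
  rintro r ⟨y, hy, rfl⟩
  set R := sSup ((fun x => |g x|) '' Set.extremePoints ℝ X) with hR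
  show |g y| ≤ R
  rw [abs_le]
  constructor
  · -- -R ≤ g y, i.e. -g y ≤ R, via simons_main for -g
    have haff' : ∀ n, ∀ x ∈ X, ∀ z ∈ X, ∀ t : ℝ, t ∈ Set.Icc (0 : ℝ) 1 →
        (fun w => -(h n w)) (t • x + (1 - t) • z)
          = t * (fun w => -(h n w)) x + (1 - t) * (fun w => -(h n w)) z := by
      intro n x hx z hz t ht
      dsimp only
      rw [haff n x hx z hz t ht]
      ring
    have hcont' : ∀ n, ContinuousOn (fun w => -(h n w)) X := fun n => (hcont n).neg
    have hbdd' : ∀ n, ∀ x ∈ X, |(fun w => -(h n w)) x| ≤ C := by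
      intro n x hx
      dsimp only
      rw [abs_neg]
      exact hbdd n x hx
    have hlim' : ∀ x ∈ X, Filter.Tendsto (fun n => (fun w => -(h n w)) x)
        Filter.atTop (nhds ((fun w => -(g w)) x)) := fun x hx => (hlim x hx).neg
    rw [neg_le]
    refine le_of_forall_pos_le_add fun ε hε => ?_
    obtain ⟨b, hb, hgb⟩ := S19.simons_main hX hconv hne' (fun w => -(g w))
      haff' hcont' hbdd' hlim' y hy (ε/2) (by linarith)
    have hbR : -(g b) ≤ R :=
      le_trans (neg_le_abs _) (le_csSup hbddE (Set.mem_image_of_mem _ hb))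
    linarith
  · refine le_of_forall_pos_le_add fun ε hε => ?_
    obtain ⟨b, hb, hgb⟩ := S19.simons_main hX hconv hne' g
      haff hcont hbdd hlim y hy (ε/2) (by linarith)
    have hbR : g b ≤ R :=
      le_trans (le_abs_self _) (le_csSup hbddE (Set.mem_image_of_mem _ hb))
    linarith
end
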